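/- arXiv:1706.02040 — 2 statements merged into one kernel-verified Lean document; each statement's English description precedes it below -/
import Mathlib

section
/- Suppose P satisfies the Doeblin condition with constant a ∈ (0,1) and P_ε is another Markov kernel with ‖P_ε(x,·) − P(x,·)‖_TV ≤ ε for all x. Then any stationary distribution μ_ε of P_ε satisfies ‖μ − μ_ε‖_TV ≤ ε/a, where μ is the stationary measure of P. -/
open MeasureTheory ProbabilityTheory Filter
open scoped ENNReal

/-- Total variation distance between two measures. -/
noncomputable def tvDist {X : Type*} [MeasurableSpace X] (μ ν : Measure X) : ℝ :=
  ⨆ s : {s : Set X // MeasurableSet s}, |(μ s.1).toReal - (ν s.1).toReal|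

/-- One step of a Markov kernel acting on a measure. -/
noncomputable def stepK {X : Type*} [MeasurableSpace X] (κ : Kernel X X) (ν : Measure X) :
    Measure X :=
  ν.bind (fun x => κ x)

/-!
Write `D = tvDist μ με`. By stationarity and the triangle inequality,
`D ≤ tvDist (μ P) (με P) + tvDist (με P) (με Pε)`. The second term is at most `ε`
row by row. The first is at most `(1 - a) D` by Dobrushin's contraction: for a measurable `s`, both sides
integrate `x ↦ P(x, s)`, whose oscillation is at most `1 - a`, and after subtracting its infimum
the layer-cake formula bounds the difference of integrals by `(1 - a) D`. Hence `a D ≤ ε`.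
-/

section TotalVariation

variable {X : Type*} [MeasurableSpace X]

lemma abs_sub_le_tvDist (μ ν : Measure X) [IsFiniteMeasure μ] [IsFiniteMeasure ν]
    {s : Set X} (hs : MeasurableSet s) : |μ.real s - ν.real s| ≤ tvDist μ ν := by
  refine le_ciSup (f := fun s : {s : Set X // MeasurableSet s} => |μ.real s - ν.real s|)
    ⟨μ.real Set.univ + ν.real Set.univ, ?_⟩ ⟨s, hs⟩
  rintro r ⟨t, rfl⟩
  refine (abs_sub _ _).trans (add_le_add ?_ ?_) <;>
    rw [abs_of_nonneg measureReal_nonneg] <;>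
    exact measureReal_mono (Set.subset_univ _) (measure_ne_top _ _)

lemma tvDist_le {μ ν : Measure X} {r : ℝ}
    (h : ∀ s, MeasurableSet s → |μ.real s - ν.real s| ≤ r) : tvDist μ ν ≤ r :=
  have : Nonempty {s : Set X // MeasurableSet s} := ⟨⟨∅, .empty⟩⟩
  ciSup_le fun s => h s.1 s.2

lemma tvDist_comm (μ ν : Measure X) : tvDist μ ν = tvDist ν μ := by
  simp only [tvDist, abs_sub_comm]

lemma tvDist_triangle (μ ν ρ : Measure X) [IsFiniteMeasure μ] [IsFiniteMeasure ν]
    [IsFiniteMeasure ρ] : tvDist μ ρ ≤ tvDist μ ν + tvDist ν ρ :=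
  tvDist_le fun s hs => (abs_sub_le _ (ν.real s) _).trans <|
    add_le_add (abs_sub_le_tvDist μ ν hs) (abs_sub_le_tvDist ν ρ hs)

/-- By the layer-cake formula both integrals are integrals over `t ∈ (0, b]` of `ρ{t ≤ g}`,
and the two integrands differ by at most `tvDist μ ν`. -/
lemma abs_integral_sub_integral_le_of_mem_Icc (μ ν : Measure X) [IsProbabilityMeasure μ]
    [IsProbabilityMeasure ν] {g : X → ℝ} {b : ℝ} (hg : Measurable g)
    (hgb : ∀ x, g x ∈ Set.Icc 0 b) :
    |∫ x, g x ∂μ - ∫ x, g x ∂ν| ≤ b * tvDist μ ν := by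
  obtain ⟨x₀⟩ := nonempty_of_isProbabilityMeasure μ
  have hb : 0 ≤ b := (hgb x₀).1.trans (hgb x₀).2
  have layer (ρ : Measure X) [IsProbabilityMeasure ρ] :
      ∫ x, g x ∂ρ = ∫ t in Set.Ioc 0 b, ρ.real {x | t ≤ g x} := by
    refine Integrable.integral_eq_integral_Ioc_meas_le ?_ (ae_of_all _ fun x => (hgb x).1)
      (ae_of_all _ fun x => (hgb x).2)
    refine .of_bound hg.aestronglyMeasurable b (ae_of_all _ fun x => ?_)
    rw [Real.norm_of_nonneg (hgb x).1]
    exact (hgb x).2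
  have integrableOn_meas (ρ : Measure X) [IsProbabilityMeasure ρ] :
      IntegrableOn (fun t => ρ.real {x | t ≤ g x}) (Set.Ioc 0 b) := by
    have hanti : Antitone fun t => ρ.real {x | t ≤ g x} :=
      fun t t' htt' => measureReal_mono fun x hx => htt'.trans hx
    exact (hanti.locallyIntegrable.integrableOn_isCompact isCompact_Icc).mono_set
      Set.Ioc_subset_Icc_self
  rw [layer μ, layer ν, ← integral_sub (integrableOn_meas μ) (integrableOn_meas ν),
    ← Real.norm_eq_abs]
  calc ‖∫ t in Set.Ioc 0 b, (μ.real {x | t ≤ g x} - ν.real {x | t ≤ g x})‖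
      ≤ tvDist μ ν * volume.real (Set.Ioc 0 b) :=
        norm_setIntegral_le_of_norm_le_const measure_Ioc_lt_top fun t _ =>
          abs_sub_le_tvDist μ ν (measurableSet_le measurable_const hg)
    _ = b * tvDist μ ν := by rw [Real.volume_real_Ioc_of_le hb, sub_zero, mul_comm]

lemma abs_integral_sub_integral_le_of_sub_le (μ ν : Measure X) [IsProbabilityMeasure μ]
    [IsProbabilityMeasure ν] {f : X → ℝ} {b : ℝ} (hf : Measurable f)
    (hosc : ∀ x y, f x - f y ≤ b) :
    |∫ x, f x ∂μ - ∫ x, f x ∂ν| ≤ b * tvDist μ ν := by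
  obtain ⟨x₀⟩ := nonempty_of_isProbabilityMeasure μ
  have : Nonempty X := ⟨x₀⟩
  have hbdd : BddBelow (Set.range f) := ⟨f x₀ - b, by
    rintro _ ⟨y, rfl⟩
    linarith [hosc x₀ y]⟩
  set c := ⨅ x, f x
  have hfc : ∀ x, f x - c ∈ Set.Icc 0 b := fun x =>
    ⟨sub_nonneg.2 (ciInf_le hbdd x), sub_le_comm.1 (le_ciInf fun y => sub_le_comm.1 (hosc x y))⟩
  have integral_shift (ρ : Measure X) [IsProbabilityMeasure ρ] :
      ∫ x, (f x - c) ∂ρ = ∫ x, f x ∂ρ - c := by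
    have hfi : Integrable f ρ := by
      refine .of_bound hf.aestronglyMeasurable (|c| + b) (ae_of_all _ fun x => ?_)
      rw [Real.norm_eq_abs, abs_le]
      constructor <;> linarith [neg_abs_le c, le_abs_self c, (hfc x).1, (hfc x).2]
    simp [integral_sub hfi (integrable_const c)]
  have := abs_integral_sub_integral_le_of_mem_Icc μ ν (g := fun x => f x - c)
    (hf.sub measurable_const) hfc
  rwa [integral_shift μ, integral_shift ν, sub_sub_sub_cancel_right] at this

end TotalVariation

section Kernel

variable {X : Type*} [MeasurableSpace X]

instance (κ : Kernel X X) [IsMarkovKernel κ] (μ : Measure X) [IsProbabilityMeasure μ] :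
    IsProbabilityMeasure (stepK κ μ) :=
  inferInstanceAs (IsProbabilityMeasure (κ ∘ₘ μ))

lemma stepK_real_apply (κ : Kernel X X) [IsFiniteKernel κ] (ν : Measure X) {s : Set X}
    (hs : MeasurableSet s) : (stepK κ ν).real s = ∫ x, (κ x).real s ∂ν := by
  rw [measureReal_def, stepK, Measure.bind_apply hs κ.measurable.aemeasurable,
    ← integral_toReal (κ.measurable_coe hs).aemeasurable
      (ae_of_all _ fun x => measure_lt_top _ _)]
  rfl

lemma tvDist_stepK_le (κ : Kernel X X) [IsFiniteKernel κ] {δ : ℝ}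
    (hκ : ∀ x y, tvDist (κ x) (κ y) ≤ δ) (μ ν : Measure X) [IsProbabilityMeasure μ]
    [IsProbabilityMeasure ν] : tvDist (stepK κ μ) (stepK κ ν) ≤ δ * tvDist μ ν :=
  tvDist_le fun s hs => by
    rw [stepK_real_apply κ μ hs, stepK_real_apply κ ν hs]
    exact abs_integral_sub_integral_le_of_sub_le μ ν (κ.measurable_coe hs).ennreal_toReal
      fun x y => (le_abs_self _).trans ((abs_sub_le_tvDist (κ x) (κ y) hs).trans (hκ x y))

lemma tvDist_stepK_stepK_le (κ η : Kernel X X) [IsFiniteKernel κ] [IsFiniteKernel η] {ε : ℝ}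
    (hκη : ∀ x, tvDist (κ x) (η x) ≤ ε) (ν : Measure X) [IsProbabilityMeasure ν] :
    tvDist (stepK κ ν) (stepK η ν) ≤ ε :=
  tvDist_le fun s hs => by
    rw [stepK_real_apply κ ν hs, stepK_real_apply η ν hs, ← integral_sub
      (Kernel.IsFiniteKernel.integrable ν κ hs) (Kernel.IsFiniteKernel.integrable ν η hs),
      ← Real.norm_eq_abs]
    simpa using norm_integral_le_of_norm_le_const (μ := ν)
      (f := fun x => (κ x).real s - (η x).real s)
      (ae_of_all _ fun x => (abs_sub_le_tvDist (κ x) (η x) hs).trans (hκη x))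

end Kernel

theorem stationary_measure_perturbation_general {X : Type*}
    [MeasurableSpace X]
    (κ κε : Kernel X X) [IsMarkovKernel κ] [IsMarkovKernel κε]
    (a : ℝ) (ha : a ∈ Set.Ioo (0:ℝ) 1)
    (hD : ∀ x y : X, tvDist (κ x) (κ y) ≤ 1 - a)
    (ε : ℝ) (happrox : ∀ x : X, tvDist (κε x) (κ x) ≤ ε)
    (μ : Measure X) [IsProbabilityMeasure μ] (hμ : stepK κ μ = μ)
    (με : Measure X) [IsProbabilityMeasure με] (hμε : stepK κε με = με) :
    tvDist μ με ≤ ε / a := by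
  have hcontract : tvDist μ με ≤ (1 - a) * tvDist μ με + ε :=
    calc tvDist μ με = tvDist (stepK κ μ) (stepK κε με) := by rw [hμ, hμε]
      _ ≤ tvDist (stepK κ μ) (stepK κ με) + tvDist (stepK κ με) (stepK κε με) :=
        tvDist_triangle _ _ _
      _ ≤ (1 - a) * tvDist μ με + ε := by
        gcongr
        · exact tvDist_stepK_le κ hD μ με
        · rw [tvDist_comm]
          exact tvDist_stepK_stepK_le κε κ happrox με
  rw [le_div_iff₀ ha.1]
  linarith

theorem stationary_measure_perturbation {X : Type*} [TopologicalSpace X] [PolishSpace X]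
    [MeasurableSpace X] [BorelSpace X]
    (κ κε : Kernel X X) [IsMarkovKernel κ] [IsMarkovKernel κε]
    (a : ℝ) (ha : a ∈ Set.Ioo (0:ℝ) 1)
    (hD : ∀ x y : X, tvDist (κ x) (κ y) ≤ 1 - a)
    (ε : ℝ) (hε : 0 < ε) (happrox : ∀ x : X, tvDist (κε x) (κ x) ≤ ε)
    (μ : Measure X) [IsProbabilityMeasure μ] (hμ : stepK κ μ = μ)
    (με : Measure X) [IsProbabilityMeasure με] (hμε : stepK κε με = με) :
    tvDist μ με ≤ ε / a :=
  stationary_measure_perturbation_general κ κε a ha hD ε happrox μ hμ με hμε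
end

section
/- Let g be a measurable function of a trajectory in X^ℕ, measurable with respect to F_τ for a stopping time τ with E[τ] < ∞. If ‖P_ε(x,·) − P(x,·)‖_TV ≤ ε for all x and Law(X₀) = Law(X₀^ε), then ‖Law(g(X)) − Law(g(X^ε))‖_TV ≤ ε·E[τ], where X and X^ε are the chains with kernels P and P_ε respectively. -/
open MeasureTheory ProbabilityTheory Filter
open scoped ENNReal

/-!
Hybrid argument. For a finite horizon `N`, let the `j`-th hybrid chain move with `κ` up to time
`j` and with `κε` afterwards. Evaluated on an event of `F_{τ ∧ N}`, consecutive hybrids differ only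
through the law of a single step taken at time `j`, and only on `{j < τ}` (before that the event
is already decided); there the step laws are `ε`-close in total variation. Summing over `j < N`
gives `ε · ∑_{j<N} P(τ > j) ≤ ε · E[τ]`, and the truncation error `P(τ > N)` vanishes as `N → ∞`.
-/

open Function Set Topology

lemma norm_le_one_of_mem_Icc {a : ℝ} (ha : a ∈ Icc 0 1) : ‖a‖ ≤ 1 :=
  (Real.norm_of_nonneg ha.1).trans_le ha.2

section TotalVariation

variable {α : Type*} [MeasurableSpace α] (μ ν : Measure α)

lemma tvDist_le_of_forall {c : ℝ} (h : ∀ s, MeasurableSet s → |μ.real s - ν.real s| ≤ c) :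
    tvDist μ ν ≤ c :=
  have : Nonempty {s : Set α // MeasurableSet s} := ⟨⟨∅, .empty⟩⟩
  ciSup_le fun s => h s.1 s.2

variable [IsProbabilityMeasure μ] [IsProbabilityMeasure ν]

lemma abs_measureReal_sub_le_tvDist {s : Set α} (hs : MeasurableSet s) :
    |μ.real s - ν.real s| ≤ tvDist μ ν := by
  refine le_ciSup (f := fun s : {s : Set α // MeasurableSet s} =>
    |(μ s.1).toReal - (ν s.1).toReal|) ⟨1, ?_⟩ ⟨s, hs⟩
  rintro _ ⟨t, rfl⟩
  simpa [measureReal_def] using abs_sub_le_of_le_of_le measureReal_nonneg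
    (measureReal_le_one (μ := μ) (s := t.1)) measureReal_nonneg (measureReal_le_one (μ := ν))

lemma tvDist_nonneg : 0 ≤ tvDist μ ν := by
  simpa using abs_measureReal_sub_le_tvDist μ ν MeasurableSet.empty

lemma abs_integral_sub_le_tvDist {h : α → ℝ} (hh : Measurable h) (hh01 : ∀ a, h a ∈ Icc 0 1) :
    |∫ a, h a ∂μ - ∫ a, h a ∂ν| ≤ tvDist μ ν := by
  have layerCake : ∀ (ρ : Measure α) [IsProbabilityMeasure ρ],
      ∫ a, h a ∂ρ = ∫ t in Ioc 0 1, ρ.real {a | t ≤ h a} := fun ρ _ =>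
    (Integrable.of_bound hh.aestronglyMeasurable 1
      (ae_of_all _ fun a => norm_le_one_of_mem_Icc (hh01 a))).integral_eq_integral_Ioc_meas_le
      (ae_of_all _ fun a => (hh01 a).1) (ae_of_all _ fun a => (hh01 a).2)
  have integrableOn : ∀ (ρ : Measure α) [IsProbabilityMeasure ρ],
      IntegrableOn (fun t => ρ.real {a | t ≤ h a}) (Ioc 0 1) := by
    intro ρ _
    have hanti : Antitone fun t : ℝ => ρ.real {a | t ≤ h a} := fun s t hst =>
      measureReal_mono fun a ha => hst.trans ha
    exact (hanti.antitoneOn _).integrableOn_isCompact (isCompact_Icc (a := 0) (b := 1))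
      |>.mono_set Ioc_subset_Icc_self
  rw [layerCake μ, layerCake ν, ← integral_sub (integrableOn μ) (integrableOn ν),
    ← Real.norm_eq_abs]
  have := norm_setIntegral_le_of_norm_le_const (μ := volume) (s := Ioc (0 : ℝ) 1)
    (f := fun t => μ.real {a | t ≤ h a} - ν.real {a | t ≤ h a}) (by simp) fun t _ =>
      abs_measureReal_sub_le_tvDist μ ν (measurableSet_le measurable_const hh)
  simpa using this

end TotalVariation

section PathOperators

variable {X : Type*}

/-- Galmarino's test: `f` is measurable with respect to `F_τ` on path space. -/
def DependsOnUntil {β : Type*} (f : (ℕ → X) → β) (τ : (ℕ → X) → ℕ) : Prop :=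
  ∀ x y : ℕ → X, (∀ k ≤ τ x, x k = y k) → f x = f y

lemma DependsOnUntil.dependsOn_Iic {β : Type*} {f : (ℕ → X) → β} {τ : (ℕ → X) → ℕ} {N : ℕ}
    {b : β} (hf : DependsOnUntil f τ) (hfN : ∀ x, N < τ x → f x = b) :
    DependsOn f (Iic N) := by
  intro x y hxy
  by_cases hx : τ x ≤ N
  · exact hf x y fun k hk => hxy k (hk.trans hx)
  by_cases hy : τ y ≤ N
  · exact (hf y x fun k hk => (hxy k (hk.trans hy)).symm).symm
  rw [hfN x (not_le.1 hx), hfN y (not_le.1 hy)]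

variable [MeasurableSpace X]

noncomputable def pathStep (κ : Kernel X X) (j : ℕ) (Φ : (ℕ → X) → ℝ) (x : ℕ → X) : ℝ :=
  ∫ y, Φ (update x (j + 1) y) ∂κ (x j)

/-- `pathStepIter κ f r j x` is the expectation of `f` along the path that follows `x` up to
time `j` and then makes `r` further `κ`-steps. -/
noncomputable def pathStepIter (κ : Kernel X X) (f : (ℕ → X) → ℝ) : ℕ → ℕ → (ℕ → X) → ℝ
  | 0, _ => f
  | r + 1, j => pathStep κ j (pathStepIter κ f r (j + 1))

variable {κ κ' : Kernel X X} {Φ f : (ℕ → X) → ℝ} {j : ℕ}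

lemma measurable_pathStep [IsSFiniteKernel κ] (hΦ : Measurable Φ) :
    Measurable (pathStep κ j Φ) := by
  have := (hΦ.comp (measurable_update' (a := j + 1))).stronglyMeasurable
    |>.integral_kernel_prod_right' (κ := κ.comap (fun x : ℕ → X => x j) (measurable_pi_apply j))
    |>.measurable
  simp only [Kernel.comap_apply, comp_apply] at this
  exact this

lemma pathStep_mem_Icc [IsMarkovKernel κ] (hΦ : ∀ x, Φ x ∈ Icc 0 1) (x : ℕ → X) :
    pathStep κ j Φ x ∈ Icc 0 1 :=
  ⟨integral_nonneg fun _ => (hΦ _).1,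
    (integral_mono_of_nonneg (ae_of_all _ fun _ => (hΦ _).1) (integrable_const 1)
      (ae_of_all _ fun _ => (hΦ _).2)).trans (by simp)⟩

lemma dependsOn_pathStep (hΦ : DependsOn Φ (Iic (j + 1))) :
    DependsOn (pathStep κ j Φ) (Iic j) := by
  intro x y hxy
  rw [pathStep, pathStep, hxy j (mem_Iic.2 le_rfl)]
  refine integral_congr_ae (ae_of_all _ fun z => hΦ fun k hk => ?_)
  rcases (mem_Iic.1 hk).lt_or_eq with hk | rfl
  · simp [update_of_ne hk.ne, hxy k (Nat.lt_succ_iff.1 hk)]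
  · simp

lemma pathStep_eq_of_forall_update [IsMarkovKernel κ] {x : ℕ → X} {c : ℝ}
    (h : ∀ y, Φ (update x (j + 1) y) = c) : pathStep κ j Φ x = c := by
  simp [pathStep, h]

lemma abs_pathStep_sub_le_tvDist [IsMarkovKernel κ] [IsMarkovKernel κ'] (hΦ : Measurable Φ)
    (hΦ01 : ∀ x, Φ x ∈ Icc 0 1) (x : ℕ → X) :
    |pathStep κ j Φ x - pathStep κ' j Φ x| ≤ tvDist (κ (x j)) (κ' (x j)) :=
  abs_integral_sub_le_tvDist _ _ (hΦ.comp (measurable_update x)) fun _ => hΦ01 _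

lemma measurable_pathStepIter [IsSFiniteKernel κ] (hf : Measurable f) :
    ∀ r j, Measurable (pathStepIter κ f r j)
  | 0, _ => hf
  | r + 1, _ => measurable_pathStep (measurable_pathStepIter hf r _)

lemma pathStepIter_mem_Icc [IsMarkovKernel κ] (hf : ∀ x, f x ∈ Icc 0 1) :
    ∀ r j x, pathStepIter κ f r j x ∈ Icc 0 1
  | 0, _, x => hf x
  | r + 1, _, x => pathStep_mem_Icc (pathStepIter_mem_Icc hf r _) x

lemma dependsOn_pathStepIter :
    ∀ r j, DependsOn f (Iic (j + r)) → DependsOn (pathStepIter κ f r j) (Iic j)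
  | 0, _, hf => hf
  | r + 1, j, hf => dependsOn_pathStep <|
      dependsOn_pathStepIter r (j + 1) (by rwa [add_right_comm, add_assoc])

lemma pathStepIter_eq_of_cylinder [IsMarkovKernel κ] {x : ℕ → X} {i : ℕ}
    (hf : ∀ z, (∀ k ≤ i, z k = x k) → f z = f x) :
    ∀ r j, i ≤ j → ∀ z, (∀ k ≤ i, z k = x k) → pathStepIter κ f r j z = f x
  | 0, _, _, z, hz => hf z hz
  | r + 1, j, hij, z, hz => pathStep_eq_of_forall_update fun y =>
      pathStepIter_eq_of_cylinder hf r (j + 1) (by omega) _ fun k hk => by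
        rw [update_of_ne (by omega)]
        exact hz k hk

end PathOperators

section ConditionalKernel

variable {Ω β γ : Type*} {m mΩ : MeasurableSpace Ω} [MeasurableSpace β] [MeasurableSpace γ]
  {μ : Measure Ω} [IsFiniteMeasure μ]

theorem map_prodMk_eq_compProd (hm : m ≤ mΩ) {W : Ω → β} {Z : Ω → γ} (hW : Measurable[m] W)
    (hZ : Measurable Z) {η : Kernel β γ} [IsMarkovKernel η]
    (hη : ∀ A, MeasurableSet A →
      μ[fun ω => A.indicator (fun _ => (1 : ℝ)) (Z ω) | m] =ᵐ[μ] fun ω => (η (W ω) A).toReal) :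
    μ.map (fun ω => (W ω, Z ω)) = μ.map W ⊗ₘ η := by
  have hWm : Measurable W := hW.mono hm le_rfl
  refine Measure.ext_prod fun {S A} hS hA => ?_
  rw [Measure.map_apply (hWm.prodMk hZ) (hS.prod hA), mk_preimage_prod,
    Measure.compProd_apply_prod hS hA, setLIntegral_map hS (η.measurable_coe hA) hWm]
  have hfin : ∫⁻ ω in W ⁻¹' S, η (W ω) A ∂μ ≠ ∞ :=
    ne_top_of_le_ne_top (measure_ne_top μ (W ⁻¹' S))
      ((lintegral_mono fun _ => prob_le_one).trans_eq (setLIntegral_one _))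
  refine (ENNReal.toReal_eq_toReal_iff' (measure_ne_top _ _) hfin).1 ?_
  calc (μ (W ⁻¹' S ∩ Z ⁻¹' A)).toReal
      = ∫ ω in W ⁻¹' S, (Z ⁻¹' A).indicator 1 ω ∂μ := by
        rw [integral_indicator_one (hZ hA), measureReal_restrict_apply (hZ hA),
          measureReal_def, inter_comm]
    _ = ∫ ω in W ⁻¹' S, μ[fun ω => A.indicator (fun _ => (1 : ℝ)) (Z ω) | m] ω ∂μ :=
        (setIntegral_condExp hm ((integrable_const (1 : ℝ)).indicator (hZ hA)) (hW hS)).symm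
    _ = ∫ ω in W ⁻¹' S, (η (W ω) A).toReal ∂μ :=
        setIntegral_congr_ae (hm _ (hW hS)) ((hη A hA).mono fun ω h _ => h)
    _ = (∫⁻ ω in W ⁻¹' S, η (W ω) A ∂μ).toReal :=
        integral_toReal ((η.measurable_coe hA).comp hWm).aemeasurable
          (ae_of_all _ fun _ => measure_lt_top _ _)

theorem integral_comp_prodMk_eq_integral_kernel (hm : m ≤ mΩ) {W : Ω → β} {Z : Ω → γ}
    (hW : Measurable[m] W) (hZ : Measurable Z) {η : Kernel β γ} [IsMarkovKernel η]
    (hη : ∀ A, MeasurableSet A →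
      μ[fun ω => A.indicator (fun _ => (1 : ℝ)) (Z ω) | m] =ᵐ[μ] fun ω => (η (W ω) A).toReal)
    {Ψ : β × γ → ℝ} (hΨ : Measurable Ψ) (C : ℝ) (hΨC : ∀ p, ‖Ψ p‖ ≤ C) :
    ∫ ω, Ψ (W ω, Z ω) ∂μ = ∫ ω, ∫ y, Ψ (W ω, y) ∂η (W ω) ∂μ := by
  have hWm : Measurable W := hW.mono hm le_rfl
  rw [← integral_map (hWm.prodMk hZ).aemeasurable hΨ.aestronglyMeasurable,
    map_prodMk_eq_compProd hm hW hZ hη,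
    Measure.integral_compProd (Integrable.of_bound hΨ.aestronglyMeasurable C (ae_of_all _ hΨC)),
    integral_map hWm.aemeasurable
      hΨ.stronglyMeasurable.integral_kernel_prod_right'.aestronglyMeasurable]

end ConditionalKernel

section MarkovChain

variable {X Ω : Type*} [MeasurableSpace X] [mΩ : MeasurableSpace Ω]

structure IsMarkovChain (μ : Measure Ω) (𝓕 : Filtration ℕ mΩ) (κ : Kernel X X)
    (Y : ℕ → Ω → X) : Prop where
  adapted : Adapted 𝓕 Y
  condExp_indicator : ∀ (n : ℕ) (A : Set X), MeasurableSet A →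
    μ[fun ω => A.indicator (fun _ => (1 : ℝ)) (Y (n + 1) ω) | 𝓕 n]
      =ᵐ[μ] fun ω => (κ (Y n ω) A).toReal

namespace IsMarkovChain

variable {μ : Measure Ω} {𝓕 : Filtration ℕ mΩ} {κ : Kernel X X} {Y : ℕ → Ω → X}

lemma measurable (hY : IsMarkovChain μ 𝓕 κ Y) (n : ℕ) : Measurable (Y n) :=
  (hY.adapted n).mono (𝓕.le n) le_rfl

lemma measurable_path (hY : IsMarkovChain μ 𝓕 κ Y) : Measurable fun ω n => Y n ω :=
  measurable_pi_lambda _ hY.measurable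

theorem integral_pathStep [IsFiniteMeasure μ] [IsMarkovKernel κ] (hY : IsMarkovChain μ 𝓕 κ Y)
    {j : ℕ} {Φ : (ℕ → X) → ℝ} (hΦ : Measurable Φ) (C : ℝ) (hΦC : ∀ x, ‖Φ x‖ ≤ C)
    (hΦj : DependsOn Φ (Iic (j + 1))) :
    ∫ ω, Φ (fun n => Y n ω) ∂μ = ∫ ω, pathStep κ j Φ (fun n => Y n ω) ∂μ := by
  set W : Ω → ℕ → X := fun ω n => Y (min n j) ω
  have hW : Measurable[𝓕 j] W := by
    have h : ∀ n, Measurable[𝓕 j] fun ω => W ω n := fun n =>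
      (hY.adapted (min n j)).mono (𝓕.mono (min_le_right n j)) le_rfl
    let _ : MeasurableSpace Ω := 𝓕 j
    exact measurable_pi_lambda W h
  have hWj : ∀ ω, W ω j = Y j ω := fun ω => by simp [W]
  have hupdate : ∀ ω y, Φ (update (W ω) (j + 1) y) = Φ (update (fun n => Y n ω) (j + 1) y) :=
    fun ω y => hΦj fun k hk => by
      rcases (mem_Iic.1 hk).lt_or_eq with hk | rfl
      · simp [update_of_ne hk.ne, W, min_eq_left (Nat.lt_succ_iff.1 hk)]
      · simp
  have hcond : ∀ A, MeasurableSet A →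
      μ[fun ω => A.indicator (fun _ => (1 : ℝ)) (Y (j + 1) ω) | 𝓕 j] =ᵐ[μ]
        fun ω => (κ.comap (fun x => x j) (measurable_pi_apply j) (W ω) A).toReal :=
    fun A hA => (hY.condExp_indicator j A hA).trans
      (ae_of_all _ fun ω => by simp only [Kernel.comap_apply, hWj])
  have key := integral_comp_prodMk_eq_integral_kernel (𝓕.le j) hW (hY.measurable (j + 1)) hcond
    (Ψ := fun p => Φ (update p.1 (j + 1) p.2)) (hΦ.comp (measurable_update' (a := j + 1)))
    C fun _ => hΦC _
  simp only [hupdate, Kernel.comap_apply, hWj, update_eq_self] at key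
  exact key

theorem integral_pathStepIter [IsFiniteMeasure μ] [IsMarkovKernel κ]
    (hY : IsMarkovChain μ 𝓕 κ Y) {f : (ℕ → X) → ℝ} (hf : Measurable f)
    (hf01 : ∀ x, f x ∈ Icc 0 1) :
    ∀ r j, DependsOn f (Iic (j + r)) →
      ∫ ω, f (fun n => Y n ω) ∂μ = ∫ ω, pathStepIter κ f r j (fun n => Y n ω) ∂μ
  | 0, _, _ => rfl
  | r + 1, j, hfj => by
    have hfj' : DependsOn f (Iic (j + 1 + r)) := by rwa [add_right_comm, add_assoc]
    rw [hY.integral_pathStepIter hf hf01 r (j + 1) hfj']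
    exact hY.integral_pathStep (measurable_pathStepIter hf r _) 1
      (fun x => norm_le_one_of_mem_Icc (pathStepIter_mem_Icc hf01 r (j + 1) x))
      (dependsOn_pathStepIter r (j + 1) hfj')

end IsMarkovChain

end MarkovChain

section Comparison

variable {X Ω Ω' : Type*} [MeasurableSpace X] [mΩ : MeasurableSpace Ω] [mΩ' : MeasurableSpace Ω']
  {μ : Measure Ω} {μ' : Measure Ω'}

theorem integral_comp_path_eq_of_map_eq {Φ : (ℕ → X) → ℝ} (hΦ : Measurable Φ)
    (hΦ0 : DependsOn Φ (Iic 0)) {Y : ℕ → Ω → X} {Y' : ℕ → Ω' → X} (hY : Measurable (Y 0))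
    (hY' : Measurable (Y' 0)) (h : μ.map (Y 0) = μ'.map (Y' 0)) :
    ∫ ω, Φ (fun n => Y n ω) ∂μ = ∫ ω, Φ (fun n => Y' n ω) ∂μ' := by
  have hconst : ∀ x : ℕ → X, Φ x = Φ fun _ => x 0 :=
    fun x => hΦ0 fun k hk => by rw [Nat.le_zero.1 hk]
  have hΦ' : Measurable fun c : X => Φ fun _ => c :=
    hΦ.comp (measurable_pi_lambda _ fun _ => measurable_id)
  calc ∫ ω, Φ (fun n => Y n ω) ∂μ = ∫ ω, Φ (fun _ => Y 0 ω) ∂μ :=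
        integral_congr_ae (ae_of_all _ fun ω => hconst _)
    _ = ∫ ω, Φ (fun _ => Y' 0 ω) ∂μ' := by
        rw [← integral_map hY.aemeasurable hΦ'.aestronglyMeasurable, h,
          integral_map hY'.aemeasurable hΦ'.aestronglyMeasurable]
    _ = ∫ ω, Φ (fun n => Y' n ω) ∂μ' :=
        integral_congr_ae (ae_of_all _ fun ω => (hconst fun n => Y' n ω).symm)

theorem abs_integral_pathStep_sub_le [IsFiniteMeasure μ] {κ κ' : Kernel X X}
    [IsMarkovKernel κ] [IsMarkovKernel κ'] {ε : ℝ} (hκ : ∀ x, tvDist (κ x) (κ' x) ≤ ε)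
    {Z : Ω → ℕ → X} (hZ : Measurable Z) {τ : (ℕ → X) → ℕ} (hτ : Measurable τ) {j : ℕ}
    {Φ : (ℕ → X) → ℝ} (hΦ : Measurable Φ) (hΦ01 : ∀ x, Φ x ∈ Icc 0 1)
    (hΦτ : ∀ x, τ x ≤ j → ∀ y, Φ (update x (j + 1) y) = Φ x) :
    |∫ ω, pathStep κ j Φ (Z ω) ∂μ - ∫ ω, pathStep κ' j Φ (Z ω) ∂μ|
      ≤ ε * μ.real {ω | j < τ (Z ω)} := by
  have hE : MeasurableSet {ω | j < τ (Z ω)} := (hτ.comp hZ) measurableSet_Ioi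
  have hint : ∀ (ρ : Kernel X X) [IsMarkovKernel ρ], Integrable (fun ω => pathStep ρ j Φ (Z ω)) μ :=
    fun ρ _ => Integrable.of_bound ((measurable_pathStep hΦ).comp hZ).aestronglyMeasurable 1
      (ae_of_all _ fun ω => norm_le_one_of_mem_Icc (pathStep_mem_Icc hΦ01 (Z ω)))
  have hpointwise : ∀ ω, |pathStep κ j Φ (Z ω) - pathStep κ' j Φ (Z ω)|
      ≤ {ω | j < τ (Z ω)}.indicator (fun _ => ε) ω := by
    intro ω
    by_cases h : j < τ (Z ω)
    · rw [indicator_of_mem (show ω ∈ {ω | j < τ (Z ω)} from h)]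
      exact (abs_pathStep_sub_le_tvDist hΦ hΦ01 _).trans (hκ _)
    · rw [indicator_of_notMem (show ω ∉ {ω | j < τ (Z ω)} from h),
        pathStep_eq_of_forall_update (hΦτ _ (not_lt.1 h)),
        pathStep_eq_of_forall_update (hΦτ _ (not_lt.1 h)), sub_self, abs_zero]
  calc |∫ ω, pathStep κ j Φ (Z ω) ∂μ - ∫ ω, pathStep κ' j Φ (Z ω) ∂μ|
      = |∫ ω, (pathStep κ j Φ (Z ω) - pathStep κ' j Φ (Z ω)) ∂μ| := by
        rw [integral_sub (hint κ) (hint κ')]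
    _ ≤ ∫ ω, |pathStep κ j Φ (Z ω) - pathStep κ' j Φ (Z ω)| ∂μ := abs_integral_le_integral_abs
    _ ≤ ∫ ω, {ω | j < τ (Z ω)}.indicator (fun _ => ε) ω ∂μ :=
        integral_mono ((hint κ).sub (hint κ')).abs ((integrable_const ε).indicator hE) hpointwise
    _ = ε * μ.real {ω | j < τ (Z ω)} := by
        rw [integral_indicator_const _ hE, smul_eq_mul, mul_comm]

variable {𝓕 : Filtration ℕ mΩ} {𝓕' : Filtration ℕ mΩ'} {κ κε : Kernel X X}
  {Xc : ℕ → Ω → X} {Xe : ℕ → Ω' → X}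

theorem abs_integral_sub_le_sum_measureReal [IsFiniteMeasure μ] [IsFiniteMeasure μ']
    [IsMarkovKernel κ] [IsMarkovKernel κε] (hXc : IsMarkovChain μ 𝓕 κ Xc)
    (hXe : IsMarkovChain μ' 𝓕' κε Xe) (hinit : μ.map (Xc 0) = μ'.map (Xe 0)) {ε : ℝ}
    (happrox : ∀ x, tvDist (κε x) (κ x) ≤ ε) {τ : (ℕ → X) → ℕ} (hτ : Measurable τ)
    {f : (ℕ → X) → ℝ} {N : ℕ} (hf : Measurable f) (hf01 : ∀ x, f x ∈ Icc 0 1)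
    (hfN : DependsOn f (Iic N)) (hfτ : DependsOnUntil f τ) :
    |∫ ω, f (fun n => Xc n ω) ∂μ - ∫ ω, f (fun n => Xe n ω) ∂μ'|
      ≤ ε * ∑ j ∈ Finset.range N, μ.real {ω | j < τ (fun n => Xc n ω)} := by
  -- `A j` is the expectation of `f` under the `j`-th hybrid chain
  set A : ℕ → ℝ := fun j => ∫ ω, pathStepIter κε f (N - j) j (fun n => Xc n ω) ∂μ
  have hfN' : DependsOn f (Iic (0 + N)) := by rwa [zero_add]
  have hA0 : A 0 = ∫ ω, f (fun n => Xe n ω) ∂μ' := by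
    rw [hXe.integral_pathStepIter hf hf01 N 0 hfN']
    exact integral_comp_path_eq_of_map_eq (measurable_pathStepIter hf N 0)
      (dependsOn_pathStepIter N 0 hfN') (hXc.measurable 0) (hXe.measurable 0) hinit
  have hAN : A N = ∫ ω, f (fun n => Xc n ω) ∂μ := by simp [A, pathStepIter]
  have hstep : ∀ {j}, j < N →
      dist (A j) (A (j + 1)) ≤ ε * μ.real {ω | j < τ (fun n => Xc n ω)} := by
    intro j hj
    obtain ⟨r, rfl⟩ : ∃ r, N = j + 1 + r := ⟨N - (j + 1), by omega⟩
    set Φ := pathStepIter κε f r (j + 1)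
    have hAj : A j = ∫ ω, pathStep κε j Φ (fun n => Xc n ω) ∂μ := by
      simp only [A, show j + 1 + r - j = r + 1 by omega, pathStepIter, Φ]
    have hAj1 : A (j + 1) = ∫ ω, pathStep κ j Φ (fun n => Xc n ω) ∂μ := by
      simp only [A, show j + 1 + r - (j + 1) = r by omega]
      exact hXc.integral_pathStep (measurable_pathStepIter hf r _) 1
        (fun x => norm_le_one_of_mem_Icc (pathStepIter_mem_Icc hf01 r (j + 1) x))
        (dependsOn_pathStepIter r (j + 1) hfN)
    rw [Real.dist_eq, hAj, hAj1]
    refine abs_integral_pathStep_sub_le happrox hXc.measurable_path hτ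
      (measurable_pathStepIter hf r _) (pathStepIter_mem_Icc hf01 r _) fun x hx y => ?_
    have hcyl : ∀ z, (∀ k ≤ j, z k = x k) → f z = f x :=
      fun z hz => (hfτ x z fun k hk => (hz k (hk.trans hx)).symm).symm
    show pathStepIter κε f r (j + 1) (update x (j + 1) y) = pathStepIter κε f r (j + 1) x
    rw [pathStepIter_eq_of_cylinder hcyl r (j + 1) (by omega) _
        fun k hk => update_of_ne (show k ≠ j + 1 by omega) _ _,
      pathStepIter_eq_of_cylinder hcyl r (j + 1) (by omega) x fun _ _ => rfl]
  calc |∫ ω, f (fun n => Xc n ω) ∂μ - ∫ ω, f (fun n => Xe n ω) ∂μ'| = dist (A 0) (A N) := by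
        rw [hA0, hAN, Real.dist_eq, abs_sub_comm]
    _ ≤ ∑ j ∈ Finset.range N, ε * μ.real {ω | j < τ (fun n => Xc n ω)} :=
        dist_le_range_sum_of_dist_le N hstep
    _ = ε * ∑ j ∈ Finset.range N, μ.real {ω | j < τ (fun n => Xc n ω)} :=
        (Finset.mul_sum _ _ _).symm

end Comparison

section Tails

variable {Ω : Type*} [MeasurableSpace Ω] {μ : Measure Ω} [IsFiniteMeasure μ]

lemma abs_measureReal_sub_le_of_subset_union {s t u : Set Ω} (hst : s ⊆ t) (hts : t ⊆ s ∪ u) :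
    |μ.real t - μ.real s| ≤ μ.real u := by
  rw [abs_of_nonneg (sub_nonneg.2 (measureReal_mono hst))]
  linarith [measureReal_mono (μ := μ) hts, measureReal_union_le (μ := μ) s u]

lemma tendsto_measureReal_lt_atTop {V : Ω → ℕ} (hV : Measurable V) :
    Tendsto (fun N : ℕ => μ.real {ω | N < V ω}) atTop (𝓝 0) := by
  have h := tendsto_measure_iInter_atTop (μ := μ)
    (fun N : ℕ => (hV measurableSet_Ioi).nullMeasurableSet)
    (fun a b hab ω h => lt_of_le_of_lt hab h) ⟨0, measure_ne_top _ _⟩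
  rw [iInter_eq_empty_iff.2 fun ω => ⟨V ω, lt_irrefl (V ω)⟩, measure_empty] at h
  exact (ENNReal.tendsto_toReal ENNReal.zero_ne_top).comp h

lemma sum_measureReal_lt_le_integral {V : Ω → ℕ} (hV : Measurable V)
    (hint : Integrable (fun ω => (V ω : ℝ)) μ) (N : ℕ) :
    ∑ j ∈ Finset.range N, μ.real {ω | j < V ω} ≤ ∫ ω, (V ω : ℝ) ∂μ := by
  have hE : ∀ j : ℕ, MeasurableSet {ω | j < V ω} := fun j => hV measurableSet_Ioi
  have hcount : ∀ ω, ∑ j ∈ Finset.range N, {ω | j < V ω}.indicator (1 : Ω → ℝ) ω ≤ V ω := by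
    intro ω
    simp only [indicator_apply, mem_ofPred_eq, Pi.one_apply, Finset.sum_boole]
    exact_mod_cast (Finset.card_le_card fun j hj => Finset.mem_range.2
      (Finset.mem_filter.1 hj).2).trans (Finset.card_range _).le
  have hint' : ∀ j, Integrable ({ω | j < V ω}.indicator (1 : Ω → ℝ)) μ :=
    fun j => (integrable_const 1).indicator (hE j)
  calc ∑ j ∈ Finset.range N, μ.real {ω | j < V ω}
      = ∫ ω, ∑ j ∈ Finset.range N, {ω | j < V ω}.indicator (1 : Ω → ℝ) ω ∂μ := by
        rw [integral_finsetSum _ fun j _ => hint' j]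
        simp only [integral_indicator_one (hE _)]
    _ ≤ ∫ ω, (V ω : ℝ) ∂μ := integral_mono (integrable_finsetSum _ fun j _ => hint' j) hint hcount

lemma abs_measureReal_preimage_sub_truncation_le {X : Type*} (Z : Ω → ℕ → X)
    (τ : (ℕ → X) → ℕ) (g : (ℕ → X) → ℝ) (B : Set ℝ) (N : ℕ) :
    |μ.real ((fun ω => g (Z ω)) ⁻¹' B) - μ.real (Z ⁻¹' ({x | τ x ≤ N} ∩ g ⁻¹' B))|
      ≤ μ.real {ω | N < τ (Z ω)} :=
  abs_measureReal_sub_le_of_subset_union (fun _ h => h.2)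
    fun ω h => (le_or_gt (τ (Z ω)) N).imp (fun hτN => ⟨hτN, h⟩) id

end Tails

section MainBound

variable {X Ω Ω' : Type*} [MeasurableSpace X] [mΩ : MeasurableSpace Ω] [mΩ' : MeasurableSpace Ω']
  {μ : Measure Ω} {μ' : Measure Ω'} {𝓕 : Filtration ℕ mΩ} {𝓕' : Filtration ℕ mΩ'}
  {κ κε : Kernel X X} {Xc : ℕ → Ω → X} {Xe : ℕ → Ω' → X}
  [IsProbabilityMeasure μ] [IsProbabilityMeasure μ'] [IsMarkovKernel κ] [IsMarkovKernel κε]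

theorem abs_measureReal_sub_le_add_tails (hXc : IsMarkovChain μ 𝓕 κ Xc)
    (hXe : IsMarkovChain μ' 𝓕' κε Xe) (hinit : μ.map (Xc 0) = μ'.map (Xe 0)) {ε : ℝ}
    (happrox : ∀ x, tvDist (κε x) (κ x) ≤ ε) {τ : (ℕ → X) → ℕ} (hτ : Measurable τ)
    (hττ : DependsOnUntil τ τ) {g : (ℕ → X) → ℝ} (hg : Measurable g) (hgτ : DependsOnUntil g τ)
    {B : Set ℝ} (hB : MeasurableSet B) (N : ℕ) :
    |μ.real ((fun ω => g (fun n => Xc n ω)) ⁻¹' B)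
        - μ'.real ((fun ω => g (fun n => Xe n ω)) ⁻¹' B)|
      ≤ μ.real {ω | N < τ (fun n => Xc n ω)}
        + ε * ∑ j ∈ Finset.range N, μ.real {ω | j < τ (fun n => Xc n ω)}
        + μ'.real {ω | N < τ (fun n => Xe n ω)} := by
  set T : Set (ℕ → X) := {x | τ x ≤ N} ∩ g ⁻¹' B
  have hT : MeasurableSet T := (hτ measurableSet_Iic).inter (hg hB)
  have hTτ : DependsOnUntil (T.indicator (1 : (ℕ → X) → ℝ)) τ := fun x y hxy => by
    have hmem : x ∈ T ↔ y ∈ T := by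
      change τ x ≤ N ∧ g x ∈ B ↔ τ y ≤ N ∧ g y ∈ B
      rw [hττ x y hxy, hgτ x y hxy]
    by_cases hx : x ∈ T
    · rw [indicator_of_mem hx, indicator_of_mem (hmem.1 hx)]
      rfl
    · rw [indicator_of_notMem hx, indicator_of_notMem (mt hmem.2 hx)]
  have hTN : DependsOn (T.indicator (1 : (ℕ → X) → ℝ)) (Iic N) :=
    hTτ.dependsOn_Iic fun x hx => indicator_of_notMem (fun h => not_le.2 hx h.1) _
  have hmiddle := abs_integral_sub_le_sum_measureReal hXc hXe hinit happrox hτ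
    (f := T.indicator 1) (measurable_const.indicator hT)
    (fun x => ⟨indicator_nonneg (fun _ _ => zero_le_one) x,
      indicator_le_self' (fun _ _ => zero_le_one) x⟩) hTN hTτ
  have hXcT : ∫ ω, T.indicator 1 (fun n => Xc n ω) ∂μ = μ.real ((fun ω n => Xc n ω) ⁻¹' T) :=
    integral_indicator_one (hXc.measurable_path hT)
  have hXeT : ∫ ω, T.indicator 1 (fun n => Xe n ω) ∂μ' = μ'.real ((fun ω n => Xe n ω) ⁻¹' T) :=
    integral_indicator_one (hXe.measurable_path hT)
  rw [hXcT, hXeT] at hmiddle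
  have h1 := abs_measureReal_preimage_sub_truncation_le (μ := μ) (fun ω n => Xc n ω) τ g B N
  have h3 := abs_measureReal_preimage_sub_truncation_le (μ := μ') (fun ω n => Xe n ω) τ g B N
  linarith [abs_sub_le (μ.real ((fun ω => g (fun n => Xc n ω)) ⁻¹' B))
      (μ.real ((fun ω n => Xc n ω) ⁻¹' T)) (μ'.real ((fun ω => g (fun n => Xe n ω)) ⁻¹' B)),
    abs_sub_le (μ.real ((fun ω n => Xc n ω) ⁻¹' T)) (μ'.real ((fun ω n => Xe n ω) ⁻¹' T))
      (μ'.real ((fun ω => g (fun n => Xe n ω)) ⁻¹' B)),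
    abs_sub_comm (μ'.real ((fun ω n => Xe n ω) ⁻¹' T))
      (μ'.real ((fun ω => g (fun n => Xe n ω)) ⁻¹' B))]

theorem abs_measureReal_sub_le_mul_integral (hXc : IsMarkovChain μ 𝓕 κ Xc)
    (hXe : IsMarkovChain μ' 𝓕' κε Xe) (hinit : μ.map (Xc 0) = μ'.map (Xe 0)) {ε : ℝ}
    (happrox : ∀ x, tvDist (κε x) (κ x) ≤ ε) {τ : (ℕ → X) → ℕ} (hτ : Measurable τ)
    (hττ : DependsOnUntil τ τ) {g : (ℕ → X) → ℝ} (hg : Measurable g) (hgτ : DependsOnUntil g τ)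
    (hτint : Integrable (fun ω => (τ (fun n => Xc n ω) : ℝ)) μ) {B : Set ℝ}
    (hB : MeasurableSet B) :
    |μ.real ((fun ω => g (fun n => Xc n ω)) ⁻¹' B)
        - μ'.real ((fun ω => g (fun n => Xe n ω)) ⁻¹' B)|
      ≤ ε * ∫ ω, (τ (fun n => Xc n ω) : ℝ) ∂μ := by
  obtain ⟨ω⟩ := nonempty_of_isProbabilityMeasure μ
  have hε : 0 ≤ ε := (tvDist_nonneg _ _).trans (happrox (Xc 0 ω))
  have hτXc : Measurable fun ω => τ (fun n => Xc n ω) := hτ.comp hXc.measurable_path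
  have hτXe : Measurable fun ω => τ (fun n => Xe n ω) := hτ.comp hXe.measurable_path
  have hlim := ((tendsto_measureReal_lt_atTop (μ := μ) hτXc).add_const
    (ε * ∫ ω, (τ (fun n => Xc n ω) : ℝ) ∂μ)).add (tendsto_measureReal_lt_atTop (μ := μ') hτXe)
  rw [zero_add, add_zero] at hlim
  refine ge_of_tendsto' hlim fun N =>
    (abs_measureReal_sub_le_add_tails hXc hXe hinit happrox hτ hττ hg hgτ hB N).trans ?_
  gcongr
  exact sum_measureReal_lt_le_integral hτXc hτint N

end MainBound

theorem path_functional_tv_bound_general {X : Type*} [MeasurableSpace X]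
    (κ κε : Kernel X X) [IsMarkovKernel κ] [IsMarkovKernel κε]
    (ε : ℝ) (happrox : ∀ x : X, tvDist (κε x) (κ x) ≤ ε)
    {Ω : Type*} [mΩ : MeasurableSpace Ω] (μ : Measure Ω) [IsProbabilityMeasure μ]
    {Ω' : Type*} [mΩ' : MeasurableSpace Ω'] (μ' : Measure Ω') [IsProbabilityMeasure μ']
    (Xc : ℕ → Ω → X) (Xe : ℕ → Ω' → X)
    (𝓕 : Filtration ℕ mΩ) (𝓕' : Filtration ℕ mΩ')
    (hadapt : Adapted 𝓕 Xc) (hadapt' : Adapted 𝓕' Xe)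
    -- Markov properties: Xc is a chain with kernel κ, Xe with kernel κε
    (hmark : ∀ (n : ℕ) (A : Set X), MeasurableSet A →
      (μ[fun ω => Set.indicator A (fun _ => (1 : ℝ)) (Xc (n + 1) ω) | 𝓕 n]
        =ᵐ[μ] fun ω => ((κ (Xc n ω)) A).toReal))
    (hmark' : ∀ (n : ℕ) (A : Set X), MeasurableSet A →
      (μ'[fun ω' => Set.indicator A (fun _ => (1 : ℝ)) (Xe (n + 1) ω') | 𝓕' n]
        =ᵐ[μ'] fun ω' => ((κε (Xe n ω')) A).toReal))
    -- equal initial laws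
    (hinit : Measure.map (Xc 0) μ = Measure.map (Xe 0) μ')
    -- τ is a stopping time of the canonical filtration on path space, and
    -- g is F_τ-measurable: both depend only on the path up to time τ
    (τ : (ℕ → X) → ℕ) (hτmeas : Measurable τ)
    (hτstop : ∀ x y : ℕ → X, (∀ k ≤ τ x, x k = y k) → τ y = τ x)
    (g : (ℕ → X) → ℝ) (hgmeas : Measurable g)
    (hg : ∀ x y : ℕ → X, (∀ k ≤ τ x, x k = y k) → g x = g y)
    (hτint : Integrable (fun ω => (τ (fun n => Xc n ω) : ℝ)) μ) :
    tvDist (Measure.map (fun ω => g (fun n => Xc n ω)) μ)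
        (Measure.map (fun ω' => g (fun n => Xe n ω')) μ')
      ≤ ε * ∫ ω, (τ (fun n => Xc n ω) : ℝ) ∂μ := by
  have hXc : IsMarkovChain μ 𝓕 κ Xc := ⟨hadapt, hmark⟩
  have hXe : IsMarkovChain μ' 𝓕' κε Xe := ⟨hadapt', hmark'⟩
  refine tvDist_le_of_forall _ _ fun B hB => ?_
  have hgXc : Measurable fun ω => g (fun n => Xc n ω) := hgmeas.comp hXc.measurable_path
  have hgXe : Measurable fun ω => g (fun n => Xe n ω) := hgmeas.comp hXe.measurable_path
  rw [map_measureReal_apply hgXc hB, map_measureReal_apply hgXe hB]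
  exact abs_measureReal_sub_le_mul_integral hXc hXe hinit happrox hτmeas
    (fun x y h => (hτstop x y h).symm) hgmeas hg hτint hB

theorem path_functional_tv_bound {X : Type*} [TopologicalSpace X] [PolishSpace X]
    [MeasurableSpace X] [BorelSpace X]
    (κ κε : Kernel X X) [IsMarkovKernel κ] [IsMarkovKernel κε]
    (ε : ℝ) (hε : 0 < ε) (happrox : ∀ x : X, tvDist (κε x) (κ x) ≤ ε)
    {Ω : Type*} [mΩ : MeasurableSpace Ω] (μ : Measure Ω) [IsProbabilityMeasure μ]
    {Ω' : Type*} [mΩ' : MeasurableSpace Ω'] (μ' : Measure Ω') [IsProbabilityMeasure μ']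
    (Xc : ℕ → Ω → X) (Xe : ℕ → Ω' → X)
    (𝓕 : Filtration ℕ mΩ) (𝓕' : Filtration ℕ mΩ')
    (hadapt : Adapted 𝓕 Xc) (hadapt' : Adapted 𝓕' Xe)
    -- Markov properties: Xc is a chain with kernel κ, Xe with kernel κε
    (hmark : ∀ (n : ℕ) (A : Set X), MeasurableSet A →
      (μ[fun ω => Set.indicator A (fun _ => (1 : ℝ)) (Xc (n + 1) ω) | 𝓕 n]
        =ᵐ[μ] fun ω => ((κ (Xc n ω)) A).toReal))
    (hmark' : ∀ (n : ℕ) (A : Set X), MeasurableSet A →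
      (μ'[fun ω' => Set.indicator A (fun _ => (1 : ℝ)) (Xe (n + 1) ω') | 𝓕' n]
        =ᵐ[μ'] fun ω' => ((κε (Xe n ω')) A).toReal))
    -- equal initial laws
    (hinit : Measure.map (Xc 0) μ = Measure.map (Xe 0) μ')
    -- τ is a stopping time of the canonical filtration on path space, and
    -- g is F_τ-measurable: both depend only on the path up to time τ
    (τ : (ℕ → X) → ℕ) (hτmeas : Measurable τ)
    (hτstop : ∀ x y : ℕ → X, (∀ k ≤ τ x, x k = y k) → τ y = τ x)
    (g : (ℕ → X) → ℝ) (hgmeas : Measurable g)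
    (hg : ∀ x y : ℕ → X, (∀ k ≤ τ x, x k = y k) → g x = g y)
    (hτint : Integrable (fun ω => (τ (fun n => Xc n ω) : ℝ)) μ) :
    tvDist (Measure.map (fun ω => g (fun n => Xc n ω)) μ)
        (Measure.map (fun ω' => g (fun n => Xe n ω')) μ')
      ≤ ε * ∫ ω, (τ (fun n => Xc n ω) : ℝ) ∂μ :=
  path_functional_tv_bound_general κ κε ε happrox (mΩ := mΩ) μ (mΩ' := mΩ') μ' Xc Xe 𝓕 𝓕' hadapt
    hadapt' hmark hmark' hinit τ hτmeas hτstop g hgmeas hg hτint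
end
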